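/- Let J(x) = (1/2)‖Hx - y‖² + λR(x) where R is 1-weakly convex and differentiable. If λ ≤ λ_min(HᵀH), then J is (λ_min(HᵀH) - λ)-strongly convex; in particular, J is convex. -/

import Mathlib

/-!
Strong convexity is additive in the modulus: the least-squares term is `λ_min`-strongly convex,
since its convexity defect along a segment is exactly `½‖H(x - x')‖² ≥ (λ_min/2)‖x - x'‖²`, while
1-weak convexity says that `R` is `(-1)`-strongly convex, so `λR` is `(-λ)`-strongly convex.
-/

open Set

section NormedSpace

variable {E : Type*} [NormedAddCommGroup E] [NormedSpace ℝ E] {s : Set E} {f g : E → ℝ}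
  {m n : ℝ}

lemma StrongConvexOn.add (hf : StrongConvexOn s m f) (hg : StrongConvexOn s n g) :
    StrongConvexOn s (m + n) (f + g) := by
  have h := UniformConvexOn.add hf hg
  unfold StrongConvexOn
  convert h using 2 with r
  simp only [Pi.add_apply]
  ring

lemma StrongConvexOn.const_smul {c : ℝ} (hc : 0 ≤ c) (hf : StrongConvexOn s m f) :
    StrongConvexOn s (c * m) (c • f) := by
  refine ⟨hf.1, fun x hx y hy a b ha hb hab => ?_⟩
  have h := mul_le_mul_of_nonneg_left (hf.2 hx hy ha hb hab) hc
  simp only [Pi.smul_apply, smul_eq_mul] at h ⊢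
  linarith

end NormedSpace

section InnerProductSpace

variable {E F : Type*} [NormedAddCommGroup E] [InnerProductSpace ℝ E]
  [NormedAddCommGroup F] [InnerProductSpace ℝ F]

lemma norm_smul_add_smul_sq {a b : ℝ} (hab : a + b = 1) (u v : F) :
    ‖a • u + b • v‖ ^ 2 = a * ‖u‖ ^ 2 + b * ‖v‖ ^ 2 - a * b * ‖u - v‖ ^ 2 := by
  simp only [← real_inner_self_eq_norm_sq, inner_add_left, inner_add_right, inner_sub_left,
    inner_sub_right, real_inner_smul_left, real_inner_smul_right]
  linear_combination (a * inner ℝ u u + b * inner ℝ v v) * hab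

lemma strongConvexOn_half_norm_sub_sq (H : E →ₗ[ℝ] F) (y : F) {c : ℝ}
    (hH : ∀ x, c * ‖x‖ ^ 2 ≤ ‖H x‖ ^ 2) :
    StrongConvexOn univ c fun x => 1 / 2 * ‖H x - y‖ ^ 2 := by
  refine ⟨convex_univ, fun x _ x' _ a b ha hb hab => ?_⟩
  have hcomb : H (a • x + b • x') - y = a • (H x - y) + b • (H x' - y) := by
    rw [map_add, map_smul, map_smul]
    linear_combination (norm := module) hab • y
  have hdiff : (H x - y) - (H x' - y) = H (x - x') := by
    rw [map_sub]
    abel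
  have hmod := mul_le_mul_of_nonneg_left (hH (x - x')) (mul_nonneg ha hb)
  dsimp only
  rw [hcomb, norm_smul_add_smul_sq hab, hdiff, smul_eq_mul, smul_eq_mul]
  linarith

end InnerProductSpace

theorem objective_strongly_convex_general {d m : ℕ}
    (H : EuclideanSpace ℝ (Fin d) →L[ℝ] EuclideanSpace ℝ (Fin m))
    (y : EuclideanSpace ℝ (Fin m)) (lam lamMin : ℝ) (hlam : 0 < lam)
    (R : EuclideanSpace ℝ (Fin d) → ℝ)
    (hR : ConvexOn ℝ Set.univ (fun x => R x + ((1 : ℝ) / 2) * ‖x‖ ^ 2))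
    (hmin : ∀ x, lamMin * ‖x‖ ^ 2 ≤ ‖H x‖ ^ 2)
    (hle : lam ≤ lamMin) :
    ConvexOn ℝ Set.univ
      (fun x => (((1 : ℝ) / 2) * ‖H x - y‖ ^ 2 + lam * R x) - ((lamMin - lam) / 2) * ‖x‖ ^ 2) ∧
    ConvexOn ℝ Set.univ
      (fun x => ((1 : ℝ) / 2) * ‖H x - y‖ ^ 2 + lam * R x) := by
  have hR' : StrongConvexOn univ (-1) R := by
    refine strongConvexOn_iff_convex.2 ?_
    simpa only [neg_div, neg_mul, sub_neg_eq_add] using hR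
  have hJ : StrongConvexOn univ (lamMin - lam) fun x => 1 / 2 * ‖H x - y‖ ^ 2 + lam * R x := by
    have h := (strongConvexOn_half_norm_sub_sq H.toLinearMap y hmin).add (hR'.const_smul hlam.le)
    rwa [mul_neg_one, ← sub_eq_add_neg] at h
  exact ⟨strongConvexOn_iff_convex.1 hJ, strongConvexOn_zero.1 (hJ.mono (sub_nonneg.2 hle))⟩

/-- Let `J(x) = (1/2)‖Hx - y‖² + λ R(x)` with `R` 1-weakly convex and differentiable. If
`λ ≤ λ_min(HᵀH)` (i.e. `λ_min ‖x‖² ≤ ‖Hx‖²` for all `x` with `λ ≤ λ_min`), then `J` is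
`(λ_min(HᵀH) - λ)`-strongly convex; in particular, `J` is convex. -/
theorem objective_strongly_convex {d m : ℕ}
    (H : EuclideanSpace ℝ (Fin d) →L[ℝ] EuclideanSpace ℝ (Fin m))
    (y : EuclideanSpace ℝ (Fin m)) (lam lamMin : ℝ) (hlam : 0 < lam)
    (R : EuclideanSpace ℝ (Fin d) → ℝ) (hRdiff : Differentiable ℝ R)
    (hR : ConvexOn ℝ Set.univ (fun x => R x + ((1 : ℝ) / 2) * ‖x‖ ^ 2))
    (hmin : ∀ x, lamMin * ‖x‖ ^ 2 ≤ ‖H x‖ ^ 2)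
    (hle : lam ≤ lamMin) :
    ConvexOn ℝ Set.univ
      (fun x => (((1 : ℝ) / 2) * ‖H x - y‖ ^ 2 + lam * R x) - ((lamMin - lam) / 2) * ‖x‖ ^ 2) ∧
    ConvexOn ℝ Set.univ
      (fun x => ((1 : ℝ) / 2) * ‖H x - y‖ ^ 2 + lam * R x) :=
  objective_strongly_convex_general H y lam lamMin hlam R hR hmin hle
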